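/- arXiv:2002.09465 — 2 statements merged into one kernel-verified Lean document; each statement's English description precedes it below -/
import Mathlib

section
/- Flattening lemma: Let q_1,...,q_k be probability distributions over [N]. There exists N' with N ≤ N' ≤ (k+1)N and a stochastic kernel (randomized map) φ from [N] to [N'] such that for every a in [N'] and every i in [k], the pushforward distribution satisfies 1/(2N') ≤ (φ∘q_i)(a) ≤ 1/N, and moreover for all i, i', the total variation distance satisfies d_TV(φ∘q_i, φ∘q_{i'}) = (1/2)·d_TV(q_i, q_{i'}). -/
/-!
Split each atom `a` of `[N]` into `s a = ⌊N ∑ᵢ qᵢ(a)⌋ + 1` copies and send `a` to the uniform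
distribution on its copies. Since the copies of different atoms are disjoint this map preserves
total variation distance exactly, every copy receives mass at most `qᵢ(a) / s a ≤ 1 / N`, and
`N ≤ N' = ∑ₐ s a ≤ N + N k`. Mixing the result half-and-half with the uniform distribution on
`[N']` gives every point mass at least `1 / (2N')` and halves all distances, because the common
uniform part cancels in every difference.
-/

open Finset

section FlatteningKernel

variable {α β : Type*} [DecidableEq α] [Fintype β]

def fiberCard (π : β → α) (a : α) : ℕ := #{b | π b = a}

noncomputable def flatteningKernel (π : β → α) (a : α) (b : β) : ℝ :=
  (if π b = a then 1 / (2 * (fiberCard π a : ℝ)) else 0) + 1 / (2 * (Fintype.card β : ℝ))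

variable (π : β → α)

theorem fiberCard_apply_pos (b : β) : 0 < fiberCard π (π b) :=
  card_pos.mpr ⟨b, by simp⟩

theorem flatteningKernel_nonneg (a : α) (b : β) : 0 ≤ flatteningKernel π a b := by
  unfold flatteningKernel
  split_ifs <;> positivity

theorem sum_flatteningKernel {a : α} (ha : fiberCard π a ≠ 0) :
    ∑ b, flatteningKernel π a b = 1 := by
  obtain ⟨b, -⟩ := card_ne_zero.mp ha
  have hβ : (Fintype.card β : ℝ) ≠ 0 := by
    have : Nonempty β := ⟨b⟩
    exact_mod_cast Fintype.card_ne_zero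
  have ha' : (fiberCard π a : ℝ) ≠ 0 := by exact_mod_cast ha
  simp only [flatteningKernel, sum_add_distrib, sum_ite, sum_const_zero, add_zero, sum_const,
    nsmul_eq_mul, card_univ]
  rw [← fiberCard]
  field_simp
  norm_num

variable [Fintype α]

theorem sum_comp_eq_sum_fiberCard_mul (g : α → ℝ) :
    ∑ b, g (π b) = ∑ a, (fiberCard π a : ℝ) * g a := by
  rw [← sum_fiberwise univ π]
  refine sum_congr rfl fun a _ => ?_
  rw [sum_congr rfl fun b hb => congrArg g (mem_filter.mp hb).2, sum_const,
    nsmul_eq_mul, fiberCard]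

theorem exists_fiberCard_eq (s : α → ℕ) :
    ∃ π : Fin (∑ a, s a) → α, ∀ a, fiberCard π a = s a := by
  let e := Fintype.equivFinOfCardEq (by simp : Fintype.card (Σ a, Fin (s a)) = ∑ a, s a)
  refine ⟨fun b => (e.symm b).1, fun a => ?_⟩
  rw [fiberCard, card_filter, ← Equiv.sum_comp e, Fintype.sum_sigma]
  simp

theorem sum_mul_flatteningKernel (p : α → ℝ) (b : β) :
    ∑ a, p a * flatteningKernel π a b =
      p (π b) / (2 * fiberCard π (π b)) + (∑ a, p a) / (2 * Fintype.card β) := by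
  simp only [flatteningKernel, mul_add, mul_ite, mul_zero, sum_add_distrib, sum_ite_eq, mem_univ,
    if_true, ← sum_mul]
  ring

theorem sum_abs_sub_flatteningKernel (hπ : ∀ a, fiberCard π a ≠ 0) (p p' : α → ℝ)
    (h : ∑ a, p a = ∑ a, p' a) :
    ∑ b, |∑ a, p a * flatteningKernel π a b - ∑ a, p' a * flatteningKernel π a b| =
      1 / 2 * ∑ a, |p a - p' a| := by
  simp only [sum_mul_flatteningKernel, h, add_sub_add_right_eq_sub, ← sub_div, abs_div, abs_mul,
    abs_two, Nat.abs_cast]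
  rw [sum_comp_eq_sum_fiberCard_mul π fun a => |p a - p' a| / (2 * fiberCard π a), mul_sum]
  refine sum_congr rfl fun a _ => ?_
  have : (fiberCard π a : ℝ) ≠ 0 := by exact_mod_cast hπ a
  field_simp

theorem one_div_two_mul_card_le_sum_mul_flatteningKernel {p : α → ℝ} (hp0 : ∀ a, 0 ≤ p a)
    (hp1 : ∑ a, p a = 1) (b : β) :
    1 / (2 * Fintype.card β) ≤ ∑ a, p a * flatteningKernel π a b := by
  rw [sum_mul_flatteningKernel, hp1, le_add_iff_nonneg_left]
  exact div_nonneg (hp0 _) (by positivity)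

theorem sum_mul_flatteningKernel_le {p : α → ℝ} (hp1 : ∑ a, p a = 1) {c : ℝ} (hc : 0 < c)
    (hcβ : c ≤ Fintype.card β) (b : β) (hb : c * p (π b) ≤ fiberCard π (π b)) :
    ∑ a, p a * flatteningKernel π a b ≤ 1 / c := by
  have hfib : (0 : ℝ) < fiberCard π (π b) := by exact_mod_cast fiberCard_apply_pos π b
  rw [sum_mul_flatteningKernel, hp1]
  have hfiber_part : p (π b) / (2 * fiberCard π (π b)) ≤ 1 / (2 * c) := by
    rw [div_le_div_iff₀ (by positivity) (by positivity)]
    linarith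
  have huniform_part : 1 / (2 * (Fintype.card β : ℝ)) ≤ 1 / (2 * c) := by gcongr
  calc p (π b) / (2 * fiberCard π (π b)) + 1 / (2 * Fintype.card β)
      ≤ 1 / (2 * c) + 1 / (2 * c) := add_le_add hfiber_part huniform_part
    _ = 1 / c := by field_simp; norm_num

end FlatteningKernel

theorem sum_floor_add_one_le {ι : Type*} [Fintype ι] {w : ι → ℝ} (hw : ∀ a, 0 ≤ w a) :
    ((∑ a, (⌊w a⌋₊ + 1) : ℕ) : ℝ) ≤ ∑ a, w a + Fintype.card ι := by
  push_cast
  rw [sum_add_distrib, sum_const, card_univ, nsmul_one]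
  gcongr with a
  exact Nat.floor_le (hw a)

theorem stmt1_general (N k : ℕ)
    (q : Fin k → Fin N → ℝ)
    (hq_nonneg : ∀ i a, 0 ≤ q i a)
    (hq_sum : ∀ i, ∑ a, q i a = 1) :
    ∃ N' : ℕ, N ≤ N' ∧ N' ≤ (k + 1) * N ∧
      ∃ φ : Fin N → Fin N' → ℝ,
        (∀ a b, 0 ≤ φ a b) ∧
        (∀ a, ∑ b, φ a b = 1) ∧
        (∀ (b : Fin N') (i : Fin k),
          1 / (2 * (N' : ℝ)) ≤ ∑ a, q i a * φ a b ∧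
          ∑ a, q i a * φ a b ≤ 1 / (N : ℝ)) ∧
        (∀ i i' : Fin k,
          (1 / 2) * ∑ b, |(∑ a, q i a * φ a b) - (∑ a, q i' a * φ a b)| =
            (1 / 2) * ((1 / 2) * ∑ a, |q i a - q i' a|)) := by
  set w : Fin N → ℝ := fun a => N * ∑ i, q i a
  have hw : ∀ a, 0 ≤ w a := fun a =>
    mul_nonneg N.cast_nonneg (sum_nonneg fun i _ => hq_nonneg i a)
  set s : Fin N → ℕ := fun a => ⌊w a⌋₊ + 1
  obtain ⟨π, hπ⟩ := exists_fiberCard_eq s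
  have hN' : N ≤ ∑ a, s a := by
    simpa using sum_le_sum fun a (_ : a ∈ univ) => Nat.le_add_left 1 ⌊w a⌋₊
  refine ⟨∑ a, s a, hN', ?_, flatteningKernel π, flatteningKernel_nonneg π,
    fun a => sum_flatteningKernel π (by simp [hπ, s]), fun b i => ⟨?_, ?_⟩, fun i i' => ?_⟩
  · have hw_sum : ∑ a, w a = N * k := by
      rw [← mul_sum, sum_comm]
      simp [hq_sum]
    have hsum : ((∑ a, s a : ℕ) : ℝ) ≤ N * k + N := by
      simpa only [hw_sum, Fintype.card_fin] using sum_floor_add_one_le hw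
    exact_mod_cast
      (hsum.trans_eq (by push_cast; ring) : ((∑ a, s a : ℕ) : ℝ) ≤ ((k + 1) * N : ℕ))
  · simpa using one_div_two_mul_card_le_sum_mul_flatteningKernel π (hq_nonneg i) (hq_sum i) b
  · have hq_le_s : (N : ℝ) * q i (π b) ≤ s (π b) :=
      calc (N : ℝ) * q i (π b) ≤ w (π b) :=
            mul_le_mul_of_nonneg_left (single_le_sum (fun j _ => hq_nonneg j (π b)) (mem_univ i))
              N.cast_nonneg
        _ ≤ s (π b) := by push_cast [s]; exact (Nat.lt_floor_add_one _).le
    exact sum_mul_flatteningKernel_le π (hq_sum i) (by exact_mod_cast (π b).pos)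
      (by rw [Fintype.card_fin]; exact_mod_cast hN') b (by rwa [hπ])
  · rw [sum_abs_sub_flatteningKernel π (by simp [hπ, s]) _ _ (by rw [hq_sum, hq_sum])]

/-- Flattening lemma. -/
theorem stmt1 (N k : ℕ) (hN : 0 < N) (hk : 0 < k)
    (q : Fin k → Fin N → ℝ)
    (hq_nonneg : ∀ i a, 0 ≤ q i a)
    (hq_sum : ∀ i, ∑ a, q i a = 1) :
    ∃ N' : ℕ, N ≤ N' ∧ N' ≤ (k + 1) * N ∧
      ∃ φ : Fin N → Fin N' → ℝ,
        (∀ a b, 0 ≤ φ a b) ∧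
        (∀ a, ∑ b, φ a b = 1) ∧
        (∀ (b : Fin N') (i : Fin k),
          1 / (2 * (N' : ℝ)) ≤ ∑ a, q i a * φ a b ∧
          ∑ a, q i a * φ a b ≤ 1 / (N : ℝ)) ∧
        (∀ i i' : Fin k,
          (1 / 2) * ∑ b, |(∑ a, q i a * φ a b) - (∑ a, q i' a * φ a b)| =
            (1 / 2) * ((1 / 2) * ∑ a, |q i a - q i' a|)) :=
  stmt1_general N k q hq_nonneg hq_sum
end

section
/- Recursive query-count bound: define Q(k,1) = C·k² and Q(k,t) = C·k^{1+η_t} + Q(k^{1−η_t}, t−1) for t ≥ 2, where η_t = 1/(2^t−1) and k a positive real with k ≥ 1. Then Q(k,t) ≤ C·t·k^{1+1/(2^t−1)} for all t ≥ 1. -/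
/-!
Induct on `t`. Writing `η_t = 1 / (2 ^ t - 1)`, the exponents telescope:
`(1 - η_{t+1}) (1 + η_t) = 1 + η_{t+1}`, so the inductive bound for the recursive call on
`k ^ (1 - η_{t+1})` is `C t k ^ (1 + η_{t+1})`, and the top-level term adds one more copy of
`C k ^ (1 + η_{t+1})`.
-/

lemma one_sub_one_div_two_mul_sub_one_mul_one_add_one_div_sub_one
    (a : ℝ) (ha : a ≠ 1) (ha' : 2 * a - 1 ≠ 0) :
    (1 - 1 / (2 * a - 1)) * (1 + 1 / (a - 1)) = 1 + 1 / (2 * a - 1) := by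
  have ha₁ : a - 1 ≠ 0 := sub_ne_zero.mpr ha
  field_simp
  ring

lemma one_sub_one_div_two_pow_succ_sub_one_mul (n : ℕ) (hn : 1 ≤ n) :
    (1 - 1 / ((2 : ℝ) ^ (n + 1) - 1)) * (1 + 1 / (2 ^ n - 1)) =
      1 + 1 / (2 ^ (n + 1) - 1) := by
  have h2 : (2 : ℝ) ≤ 2 ^ n := by simpa using pow_le_pow_right₀ (by norm_num : (1 : ℝ) ≤ 2) hn
  rw [pow_succ']
  exact one_sub_one_div_two_mul_sub_one_mul_one_add_one_div_sub_one _ (by linarith) (by linarith)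

lemma one_sub_one_div_two_pow_sub_one_nonneg (t : ℕ) (ht : 1 ≤ t) :
    0 ≤ 1 - 1 / ((2 : ℝ) ^ t - 1) := by
  have h2 : (2 : ℝ) ≤ 2 ^ t := by simpa using pow_le_pow_right₀ (by norm_num : (1 : ℝ) ≤ 2) ht
  rw [sub_nonneg, div_le_one (by linarith)]
  linarith

theorem stmt10_general (C : ℝ) (Q : ℝ → ℕ → ℝ)
    (hQ1 : ∀ k : ℝ, 1 ≤ k → Q k 1 = C * k ^ (2 : ℝ))
    (hQt : ∀ k : ℝ, 1 ≤ k → ∀ t : ℕ, 2 ≤ t →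
      Q k t = C * k ^ ((1 : ℝ) + 1 / (2 ^ t - 1)) +
        Q (k ^ ((1 : ℝ) - 1 / (2 ^ t - 1))) (t - 1)) :
    ∀ k : ℝ, 1 ≤ k → ∀ t : ℕ, 1 ≤ t →
      Q k t ≤ C * t * k ^ ((1 : ℝ) + 1 / (2 ^ t - 1)) := by
  intro k hk t ht
  induction t, ht using Nat.le_induction generalizing k with
  | base => norm_num [hQ1 k hk]
  | succ n hn ih =>
    have hk' : 1 ≤ k ^ (1 - 1 / ((2 : ℝ) ^ (n + 1) - 1)) :=
      Real.one_le_rpow hk (one_sub_one_div_two_pow_sub_one_nonneg _ (by omega))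
    have hcall := ih _ hk'
    rw [← Real.rpow_mul (by linarith), one_sub_one_div_two_pow_succ_sub_one_mul n hn] at hcall
    rw [hQt k hk (n + 1) (by omega), Nat.add_sub_cancel]
    push_cast
    linarith

/-- Recursive query-count bound for the multi-round tournament algorithm. -/
theorem stmt10 (C : ℝ) (hC : 0 < C) (Q : ℝ → ℕ → ℝ)
    (hQ1 : ∀ k : ℝ, 1 ≤ k → Q k 1 = C * k ^ (2 : ℝ))
    (hQt : ∀ k : ℝ, 1 ≤ k → ∀ t : ℕ, 2 ≤ t →
      Q k t = C * k ^ ((1 : ℝ) + 1 / (2 ^ t - 1)) +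
        Q (k ^ ((1 : ℝ) - 1 / (2 ^ t - 1))) (t - 1)) :
    ∀ k : ℝ, 1 ≤ k → ∀ t : ℕ, 1 ≤ t →
      Q k t ≤ C * t * k ^ ((1 : ℝ) + 1 / (2 ^ t - 1)) :=
  stmt10_general C Q hQ1 hQt
end
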